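/- Assume Y = K acts on itself by the regular representation, H ≤ Perm(X) is transitive, and the normalizer of H in Perm(X) is the internal semidirect product M ⋉ H for a subgroup M of Perm(X). Then N ∩ S_K(Z) = M* · B: every element of the normalizer N of W = H ≀ K that stabilizes each block X_k setwise is a product of an element of M* and an element of the base group B, and conversely M* · B ⊆ N ∩ S_K(Z). -/

import Mathlib

open Equiv

/-- The block `X_y = X × {y}` inside `Z = X × Y`. -/
def block (X Y : Type*) (y : Y) : Set (X × Y) := {p | p.2 = y}

/-- The subgroup `S_Y(Z)` of all permutations of `Z = X × Y` stabilizing every block `X_y`. -/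
def blockStab (X Y : Type*) : Subgroup (Perm (X × Y)) where
  carrier := {f | ∀ y : Y, f '' block X Y y = block X Y y}
  one_mem' := by intro y; simp
  mul_mem' := by
    intro f g hf hg y
    have hfg : ⇑(f * g) = ⇑f ∘ ⇑g := rfl
    rw [hfg, Set.image_comp, hg y, hf y]
  inv_mem' := by
    intro f hf y
    have h1 : ⇑f '' block X Y y = block X Y y := hf y
    calc ⇑f⁻¹ '' block X Y y = ⇑f⁻¹ '' (⇑f '' block X Y y) := by rw [h1]
      _ = block X Y y := by
          rw [← Set.image_comp]
          have h2 : ⇑f⁻¹ ∘ ⇑f = id := by funext p; simp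
          rw [h2, Set.image_id]

/-- For `h` a permutation of `X` and `y ∈ Y`, the permutation `h_y` of `Z = X × Y`
acting as `h` on the block `X_y` and fixing everything else. -/
noncomputable def fiberPerm (X Y : Type*) (h : Perm X) (y : Y) : Perm (X × Y) :=
  letI := Classical.decEq Y
  { toFun := fun p => if p.2 = y then (h p.1, p.2) else p
    invFun := fun p => if p.2 = y then (h.symm p.1, p.2) else p
    left_inv := fun p => by
      obtain ⟨x, y'⟩ := p
      by_cases hp : y' = y <;> simp [hp]
    right_inv := fun p => by
      obtain ⟨x, y'⟩ := p
      by_cases hp : y' = y <;> simp [hp] }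

lemma fiberPerm_apply_eq (X Y : Type*) (h : Perm X) (y : Y) (x : X) :
    fiberPerm X Y h y (x, y) = (h x, y) := by
  simp [fiberPerm]

lemma fiberPerm_apply_ne (X Y : Type*) (h : Perm X) (y : Y) (p : X × Y) (hp : p.2 ≠ y) :
    fiberPerm X Y h y p = p := by
  simp [fiberPerm, hp]

/-- The homomorphism `h ↦ h_y`. -/
noncomputable def fiberHom (X Y : Type*) (y : Y) : Perm X →* Perm (X × Y) where
  toFun h := fiberPerm X Y h y
  map_one' := by
    refine Equiv.ext fun p => ?_
    by_cases hp : p.2 = y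
    · obtain ⟨x, y'⟩ := p; subst hp; simp [fiberPerm_apply_eq]
    · simp [fiberPerm_apply_ne _ _ _ _ _ hp]
  map_mul' := by
    intro h1 h2
    refine Equiv.ext fun p => ?_
    by_cases hp : p.2 = y
    · obtain ⟨x, y'⟩ := p
      subst hp
      simp [Perm.mul_apply, fiberPerm_apply_eq]
    · simp [Perm.mul_apply, fiberPerm_apply_ne _ _ _ _ _ hp]

/-- The embedding `Λ` of permutations of `Y` into permutations of `Z = X × Y`,
`Λ(k)(x,y) = (x, k(y))`. -/
def lamHom (X Y : Type*) : Perm Y →* Perm (X × Y) where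
  toFun k := (Equiv.refl X).prodCongr k
  map_one' := Equiv.ext fun p => rfl
  map_mul' := fun k1 k2 => Equiv.ext fun p => rfl

lemma lamHom_apply (X Y : Type*) (k : Perm Y) (x : X) (y : Y) :
    lamHom X Y k (x, y) = (x, k y) := rfl

/-- The base group `B` of the wreath product: all permutations of `Z = X × Y`
stabilizing each block `X_y` and restricting to an element of `H_y` on it. -/
def baseGroup (X Y : Type*) (H : Subgroup (Perm X)) : Subgroup (Perm (X × Y)) where
  carrier := {f | ∀ y : Y, ∃ h ∈ H, ∀ x : X, f (x, y) = (h x, y)}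
  one_mem' := fun y => ⟨1, H.one_mem, fun x => rfl⟩
  mul_mem' := by
    rintro f g hf hg y
    obtain ⟨hg', hgH, hgeq⟩ := hg y
    obtain ⟨hf', hfH, hfeq⟩ := hf y
    refine ⟨hf' * hg', H.mul_mem hfH hgH, fun x => ?_⟩
    have : (f * g) (x, y) = f (g (x, y)) := rfl
    rw [this, hgeq x, hfeq (hg' x)]
    rfl
  inv_mem' := by
    rintro f hf y
    obtain ⟨h, hH, heq⟩ := hf y
    refine ⟨h⁻¹, H.inv_mem hH, fun x => ?_⟩
    have h1 : f ((h⁻¹ : Perm X) x, y) = (x, y) := by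
      rw [heq]
      simp
    calc f⁻¹ (x, y) = f⁻¹ (f ((h⁻¹ : Perm X) x, y)) := by rw [h1]
      _ = ((h⁻¹ : Perm X) x, y) := by simp

lemma mem_baseGroup_iff (X Y : Type*) (H : Subgroup (Perm X)) (f : Perm (X × Y)) :
    f ∈ baseGroup X Y H ↔ ∀ y : Y, ∃ h ∈ H, ∀ x : X, f (x, y) = (h x, y) := Iff.rfl

lemma lam_conj_base (X Y : Type*) {H : Subgroup (Perm X)} (k : Perm Y) {b : Perm (X × Y)}
    (hb : b ∈ baseGroup X Y H) : (lamHom X Y k)⁻¹ * b * lamHom X Y k ∈ baseGroup X Y H := by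
  intro y
  obtain ⟨h, hH, heq⟩ := hb (k y)
  refine ⟨h, hH, fun x => ?_⟩
  have h2 : ((lamHom X Y k)⁻¹ : Perm (X × Y)) (h x, k y) = (h x, y) := by
    have h3 : (lamHom X Y k) (h x, y) = (h x, k y) := rfl
    rw [← h3]
    simp
  calc ((lamHom X Y k)⁻¹ * b * lamHom X Y k) (x, y)
      = (lamHom X Y k)⁻¹ (b ((lamHom X Y k) (x, y))) := rfl
    _ = (lamHom X Y k)⁻¹ (b (x, k y)) := rfl
    _ = (lamHom X Y k)⁻¹ (h x, k y) := by rw [heq x]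
    _ = (h x, y) := h2

/-- The unrestricted wreath product `W = H ≀ K ≤ Perm(X × Y)`, namely the
internal product `Λ(K)·B`. -/
def wreath (X Y : Type*) (H : Subgroup (Perm X)) (K : Subgroup (Perm Y)) :
    Subgroup (Perm (X × Y)) where
  carrier := {w | ∃ k ∈ K, ∃ b ∈ baseGroup X Y H, w = lamHom X Y k * b}
  one_mem' := ⟨1, K.one_mem, 1, (baseGroup X Y H).one_mem, by simp⟩
  mul_mem' := by
    rintro w1 w2 ⟨k1, hk1, b1, hb1, rfl⟩ ⟨k2, hk2, b2, hb2, rfl⟩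
    refine ⟨k1 * k2, K.mul_mem hk1 hk2, ((lamHom X Y k2)⁻¹ * b1 * lamHom X Y k2) * b2,
      (baseGroup X Y H).mul_mem (lam_conj_base X Y k2 hb1) hb2, ?_⟩
    rw [map_mul]
    group
  inv_mem' := by
    rintro w ⟨k, hk, b, hb, rfl⟩
    refine ⟨k⁻¹, K.inv_mem hk, (lamHom X Y k⁻¹)⁻¹ * b⁻¹ * lamHom X Y k⁻¹,
      lam_conj_base X Y k⁻¹ ((baseGroup X Y H).inv_mem hb), ?_⟩
    rw [map_inv]
    group

lemma mem_wreath_iff (X Y : Type*) (H : Subgroup (Perm X)) (K : Subgroup (Perm Y))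
    (w : Perm (X × Y)) :
    w ∈ wreath X Y H K ↔ ∃ k ∈ K, ∃ b ∈ baseGroup X Y H, w = lamHom X Y k * b := Iff.rfl

/-- The image of the (right) regular representation of a group `K` in `Perm K`. -/
def rightRegular (K : Type*) [Group K] : Subgroup (Perm K) where
  carrier := Set.range (fun k : K => Equiv.mulRight k)
  one_mem' := ⟨1, by ext x; simp⟩
  mul_mem' := by
    rintro _ _ ⟨a, rfl⟩ ⟨b, rfl⟩
    exact ⟨b * a, by ext x; simp [mul_assoc]⟩
  inv_mem' := by
    rintro _ ⟨a, rfl⟩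
    exact ⟨a⁻¹, by ext x; simp⟩

/-- The homomorphism `Γ : Aut(K) → Perm(X × K)`, `Γ(γ)(x,k) = (x, γ(k))`. -/
def gammaHom (X K : Type*) [Group K] : MulAut K →* Perm (X × K) where
  toFun γ := (Equiv.refl X).prodCongr γ.toEquiv
  map_one' := Equiv.ext fun p => rfl
  map_mul' := fun γ1 γ2 => Equiv.ext fun p => rfl

lemma gammaHom_apply (X K : Type*) [Group K] (γ : MulAut K) (x : X) (k : K) :
    gammaHom X K γ (x, k) = (x, γ k) := rfl

/-- The homomorphism `m ↦ m*` from `Perm X` to `Perm (X × K)`, `m*(x,k) = (m(x), k)`. -/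
def mstarHom (X K : Type*) : Perm X →* Perm (X × K) where
  toFun m := m.prodCongr (Equiv.refl K)
  map_one' := Equiv.ext fun p => rfl
  map_mul' := fun m1 m2 => Equiv.ext fun p => rfl

lemma mstarHom_apply (X K : Type*) (m : Perm X) (x : X) (k : K) :
    mstarHom X K m (x, k) = (m x, k) := rfl

/-!
A permutation `f` stabilizing every block acts on `X × {k}` by some `g k ∈ Perm X`. Since `K`
acts regularly, `W` contains, for all `k k' : K` and `h ∈ H`, an element carrying `X × {k}` to
`X × {k'}` by `h`; conjugating it by `f ∈ N` gives `g k' * h * (g k)⁻¹ ∈ H`. With `k = k'`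
(and likewise for `f⁻¹`) each `g k` lies in `N_{Perm X}(H) = M H`, and with `h = 1` all `g k`
lie in the coset `H * g 1`. Writing `g 1 = m * h₀` then gives `m⁻¹ * g k ∈ H` for every `k`,
that is `f ∈ m* B`. Conversely `m*` commutes with `Λ(K)` and conjugates `B` into itself.
-/

lemma Subgroup.mem_normalizer_of_forall_conj_mem {G : Type*} [Group G] {H : Subgroup G} {g : G}
    (hconj : ∀ h ∈ H, g * h * g⁻¹ ∈ H) (hconj_inv : ∀ h ∈ H, g⁻¹ * h * g ∈ H) :
    g ∈ Subgroup.normalizer (H : Set G) :=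
  Subgroup.mem_normalizer_iff.mpr fun h =>
    ⟨hconj h, fun hc => by simpa [mul_assoc] using hconj_inv _ hc⟩

def prodCongrLeftHom (X Y : Type*) : (Y → Perm X) →* Perm (X × Y) where
  toFun g := prodCongrLeft g
  map_one' := rfl
  map_mul' _ _ := rfl

section Blocks

variable {X Y : Type*}

@[simp]
lemma prodCongrLeftHom_apply (g : Y → Perm X) (x : X) (y : Y) :
    prodCongrLeftHom X Y g (x, y) = (g y x, y) := rfl

lemma mstarHom_eq_prodCongrLeftHom (m : Perm X) :
    mstarHom X Y m = prodCongrLeftHom X Y (fun _ => m) := rfl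

lemma mem_blockStab_iff {f : Perm (X × Y)} : f ∈ blockStab X Y ↔ ∀ p, (f p).2 = p.2 := by
  refine ⟨fun hf p => (hf p.2).subset ⟨p, rfl, rfl⟩, fun hf y => ?_⟩
  ext q
  refine ⟨?_, fun hq => ⟨f.symm q, ?_, f.apply_symm_apply q⟩⟩
  · rintro ⟨p, hp, rfl⟩
    exact (hf p).trans hp
  · have hq' := hf (f.symm q)
    rw [f.apply_symm_apply] at hq'
    exact hq'.symm.trans hq

lemma blockStab_eq_range : blockStab X Y = (prodCongrLeftHom X Y).range := by
  ext f
  refine ⟨fun hf => ?_, ?_⟩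
  · have hf : ∀ p, (f p).2 = p.2 := mem_blockStab_iff.mp hf
    have hf_symm : ∀ p, (f.symm p).2 = p.2 := fun p => by
      simpa using (hf (f.symm p)).symm
    refine ⟨fun y =>
      { toFun := fun x => (f (x, y)).1
        invFun := fun x => (f.symm (x, y)).1
        left_inv := fun x => ?_
        right_inv := fun x => ?_ }, Equiv.ext fun p => Prod.ext rfl (hf p).symm⟩
    · show (f.symm ((f (x, y)).1, y)).1 = x
      rw [show ((f (x, y)).1, y) = f (x, y) from Prod.ext rfl (hf (x, y)).symm, f.symm_apply_apply]
    · show (f ((f.symm (x, y)).1, y)).1 = x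
      rw [show ((f.symm (x, y)).1, y) = f.symm (x, y) from Prod.ext rfl (hf_symm (x, y)).symm,
        f.apply_symm_apply]
  · rintro ⟨g, rfl⟩
    exact mem_blockStab_iff.mpr fun _ => rfl

lemma prodCongrLeftHom_mem_baseGroup {H : Subgroup (Perm X)} {g : Y → Perm X}
    (hg : ∀ y, g y ∈ H) : prodCongrLeftHom X Y g ∈ baseGroup X Y H :=
  fun y => ⟨g y, hg y, fun _ => rfl⟩

lemma mstarHom_mem_baseGroup {H : Subgroup (Perm X)} {h : Perm X} (hh : h ∈ H) :
    mstarHom X Y h ∈ baseGroup X Y H :=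
  prodCongrLeftHom_mem_baseGroup fun _ => hh

lemma baseGroup_le_blockStab (H : Subgroup (Perm X)) : baseGroup X Y H ≤ blockStab X Y := by
  intro b hb
  refine mem_blockStab_iff.mpr fun ⟨x, y⟩ => ?_
  obtain ⟨h, -, hb⟩ := hb y
  rw [hb]

lemma baseGroup_le_wreath (H : Subgroup (Perm X)) (K : Subgroup (Perm Y)) :
    baseGroup X Y H ≤ wreath X Y H K :=
  fun b hb => ⟨1, K.one_mem, b, hb, by rw [map_one, one_mul]⟩

lemma exists_mem_forall_apply_fst_of_mem_wreath {H : Subgroup (Perm X)} {K : Subgroup (Perm Y)}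
    {w : Perm (X × Y)} (hw : w ∈ wreath X Y H K) (y : Y) :
    ∃ h ∈ H, ∀ x, (w (x, y)).1 = h x := by
  obtain ⟨κ, -, b, hb, rfl⟩ := hw
  obtain ⟨h, hh, hb⟩ := hb y
  exact ⟨h, hh, fun x => by rw [Perm.mul_apply, hb, lamHom_apply]⟩

lemma commute_mstarHom_lamHom (m : Perm X) (κ : Perm Y) :
    Commute (mstarHom X Y m) (lamHom X Y κ) :=
  Equiv.ext fun _ => rfl

lemma mstarHom_conj_mem_baseGroup {H : Subgroup (Perm X)} {m : Perm X}
    (hm : m ∈ Subgroup.normalizer (H : Set (Perm X))) {b : Perm (X × Y)}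
    (hb : b ∈ baseGroup X Y H) :
    mstarHom X Y m * b * (mstarHom X Y m)⁻¹ ∈ baseGroup X Y H := by
  intro y
  obtain ⟨h, hh, hb⟩ := hb y
  refine ⟨m * h * m⁻¹, (Subgroup.mem_normalizer_iff.mp hm h).mp hh, fun x => ?_⟩
  rw [← map_inv, Perm.mul_apply, Perm.mul_apply, mstarHom_apply X Y m⁻¹, hb, mstarHom_apply]
  rfl

lemma mstarHom_conj_mem_wreath {H : Subgroup (Perm X)} {K : Subgroup (Perm Y)} {m : Perm X}
    (hm : m ∈ Subgroup.normalizer (H : Set (Perm X))) {w : Perm (X × Y)}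
    (hw : w ∈ wreath X Y H K) :
    mstarHom X Y m * w * (mstarHom X Y m)⁻¹ ∈ wreath X Y H K := by
  obtain ⟨κ, hκ, b, hb, rfl⟩ := hw
  refine ⟨κ, hκ, _, mstarHom_conj_mem_baseGroup hm hb, ?_⟩
  rw [← mul_assoc, (commute_mstarHom_lamHom m κ).eq]
  group

lemma mstarHom_mem_normalizer_wreath {H : Subgroup (Perm X)} {K : Subgroup (Perm Y)}
    {m : Perm X} (hm : m ∈ Subgroup.normalizer (H : Set (Perm X))) :
    mstarHom X Y m ∈ Subgroup.normalizer (wreath X Y H K : Set (Perm (X × Y))) := by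
  refine Subgroup.mem_normalizer_of_forall_conj_mem (fun w hw => mstarHom_conj_mem_wreath hm hw)
    fun w hw => ?_
  simpa only [map_inv, inv_inv] using mstarHom_conj_mem_wreath (inv_mem hm) hw

end Blocks

section Regular

variable {X K : Type*} [Group K] {H : Subgroup (Perm X)} {g : K → Perm X}

lemma conj_mem_of_prodCongrLeftHom_mem_normalizer
    (hg : prodCongrLeftHom X K g ∈
      Subgroup.normalizer (wreath X K H (rightRegular K) : Set (Perm (X × K))))
    {h : Perm X} (hh : h ∈ H) (k k' : K) : g k' * h * (g k)⁻¹ ∈ H := by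
  set w := lamHom X K (Equiv.mulRight (k⁻¹ * k')) * mstarHom X K h
  have hw : w ∈ wreath X K H (rightRegular K) :=
    ⟨_, ⟨k⁻¹ * k', rfl⟩, _, mstarHom_mem_baseGroup hh, rfl⟩
  obtain ⟨h', hh', hconj⟩ := exists_mem_forall_apply_fst_of_mem_wreath
    ((Subgroup.mem_normalizer_iff.mp hg w).mp hw) k
  convert hh' using 1
  ext x
  simpa [w, ← map_inv, mstarHom_apply, lamHom_apply] using hconj x

lemma apply_mem_normalizer_of_prodCongrLeftHom_mem_normalizer
    (hg : prodCongrLeftHom X K g ∈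
      Subgroup.normalizer (wreath X K H (rightRegular K) : Set (Perm (X × K))))
    (k : K) : g k ∈ Subgroup.normalizer (H : Set (Perm X)) := by
  refine Subgroup.mem_normalizer_of_forall_conj_mem
    (fun h hh => conj_mem_of_prodCongrLeftHom_mem_normalizer hg hh k k) fun h hh => ?_
  have hg_inv := inv_mem hg
  rw [← map_inv] at hg_inv
  simpa using conj_mem_of_prodCongrLeftHom_mem_normalizer hg_inv hh k k

end Regular

theorem normalizer_inter_blockStab_eq_general {X : Type*} (K : Type*) [Group K]
    (H M : Subgroup (Perm X))
    (hNH : ∀ g : Perm X, g ∈ Subgroup.normalizer (H : Set (Perm X)) ↔ ∃ m ∈ M, ∃ h ∈ H, g = m * h)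
    (f : Perm (X × K)) :
    (f ∈ Subgroup.normalizer (wreath X K H (rightRegular K) : Set (Perm (X × K))) ∧ f ∈ blockStab X K) ↔
      ∃ m ∈ M, ∃ b ∈ baseGroup X K H, f = mstarHom X K m * b := by
  have hM : ∀ m ∈ M, m ∈ Subgroup.normalizer (H : Set (Perm X)) := fun m hm =>
    (hNH m).mpr ⟨m, hm, 1, H.one_mem, (mul_one m).symm⟩
  constructor
  · rintro ⟨hN, hS⟩
    obtain ⟨g, rfl⟩ : f ∈ (prodCongrLeftHom X K).range := blockStab_eq_range ▸ hS
    obtain ⟨m, hm, h₀, hh₀, hg₁⟩ :=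
      (hNH (g 1)).mp (apply_mem_normalizer_of_prodCongrLeftHom_mem_normalizer hN 1)
    have hcoset : ∀ k, m⁻¹ * g k ∈ H := fun k => by
      have hk : g k * (g 1)⁻¹ ∈ H := by
        simpa using conj_mem_of_prodCongrLeftHom_mem_normalizer hN H.one_mem 1 k
      convert H.mul_mem ((Subgroup.mem_normalizer_iff.mp (inv_mem (hM m hm)) _).mp hk) hh₀
        using 1
      rw [hg₁]
      group
    refine ⟨m, hm, _, prodCongrLeftHom_mem_baseGroup hcoset, ?_⟩
    rw [mstarHom_eq_prodCongrLeftHom, ← map_mul]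
    congr 1
    funext k
    exact (mul_inv_cancel_left m (g k)).symm
  · rintro ⟨m, hm, b, hb, rfl⟩
    refine ⟨mul_mem (mstarHom_mem_normalizer_wreath (hM m hm))
      (Subgroup.le_normalizer (baseGroup_le_wreath H _ hb)), mul_mem ?_ (baseGroup_le_blockStab H hb)⟩
    rw [mstarHom_eq_prodCongrLeftHom, blockStab_eq_range]
    exact ⟨_, rfl⟩

/-- The key claim in the proof of **Lemma G**: with `Y = K` regular, `H ≤ Perm X`
transitive and `N_{Perm X}(H) = M ⋉ H`, one has `N ∩ S_K(Z) = M*·B`. -/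
theorem normalizer_inter_blockStab_eq {X : Type*} (K : Type*) [Group K]
    (H M : Subgroup (Perm X))
    (hH : ∀ x x' : X, ∃ h ∈ H, h x = x')
    (hNH : ∀ g : Perm X, g ∈ Subgroup.normalizer (H : Set (Perm X)) ↔ ∃ m ∈ M, ∃ h ∈ H, g = m * h)
    (hMH : M ⊓ H = ⊥) (f : Perm (X × K)) :
    (f ∈ Subgroup.normalizer (wreath X K H (rightRegular K) : Set (Perm (X × K))) ∧ f ∈ blockStab X K) ↔
      ∃ m ∈ M, ∃ b ∈ baseGroup X K H, f = mstarHom X K m * b :=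
  normalizer_inter_blockStab_eq_general K H M hNH f
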